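/- Let φ : U → V be a surjective linear map of finite-dimensional real vector spaces. Then the map φ_* : AGr^m(V) → AGr^m(U), sending an affine subspace H ⊂ V of codimension m to φ⁻¹(H), is a well-defined injective map into the affine subspaces of U of codimension m, and it is a closed embedding (a homeomorphism onto its closed image) with respect to the natural topologies on the affine Grassmannians. -/

import Mathlib

/-- Parameter space for the affine Grassmannian of codimension-`m` affine subspaces of
`W`: pairs (f, c) of a surjective continuous linear map `f : W → ℝᵐ` and `c ∈ ℝᵐ`,
topologized as a subspace of the product. -/
def AGrParam (m : ℕ) (W : Type*) [NormedAddCommGroup W] [NormedSpace ℝ W] :=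
  {p : (W →L[ℝ] (Fin m → ℝ)) × (Fin m → ℝ) // Function.Surjective p.1}

noncomputable instance (m : ℕ) (W : Type*) [NormedAddCommGroup W] [NormedSpace ℝ W] :
    TopologicalSpace (AGrParam m W) :=
  instTopologicalSpaceSubtype

/-- The affine Grassmannian `AGr m W` of affine subspaces of codimension `m` in `W`,
realized as solution sets `{x | f x = c}` of surjective affine equations. -/
structure AGr (m : ℕ) (W : Type*) [NormedAddCommGroup W] [NormedSpace ℝ W] where
  carrier : Set W
  exists_param : ∃ f : W →L[ℝ] (Fin m → ℝ),
    Function.Surjective f ∧ ∃ c : Fin m → ℝ, carrier = {x | f x = c}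

/-- The canonical surjection from parameters to the affine Grassmannian. -/
def AGrParam.toAGr {m : ℕ} {W : Type*} [NormedAddCommGroup W] [NormedSpace ℝ W]
    (p : AGrParam m W) : AGr m W :=
  ⟨{x | p.1.1 x = p.1.2}, p.1.1, p.2, p.1.2, rfl⟩

/-- The natural (quotient) topology on the affine Grassmannian. -/
noncomputable instance (m : ℕ) (W : Type*) [NormedAddCommGroup W] [NormedSpace ℝ W] :
    TopologicalSpace (AGr m W) :=
  TopologicalSpace.coinduced AGrParam.toAGr inferInstance

/-- The pull-back map `φ_* : AGr^m(V) → AGr^m(U)`, `H ↦ φ⁻¹(H)`, induced by a surjective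
linear map `φ : U → V`. -/
def pullbackAGr {m : ℕ} {U V : Type*}
    [NormedAddCommGroup U] [NormedSpace ℝ U] [FiniteDimensional ℝ U]
    [NormedAddCommGroup V] [NormedSpace ℝ V]
    (φ : U →ₗ[ℝ] V) (hφ : Function.Surjective φ) (A : AGr m V) : AGr m U := by
  refine ⟨⇑φ ⁻¹' A.carrier, ?_⟩
  obtain ⟨f, hf, c, hc⟩ := A.exists_param
  refine ⟨f.comp (LinearMap.toContinuousLinearMap φ), ?_, c, ?_⟩
  · intro y
    obtain ⟨v, hv⟩ := hf y
    obtain ⟨u, hu⟩ := hφ v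
    exact ⟨u, by simp [hu, hv]⟩
  · rw [hc]; ext u; simp

/-! Lifted to parameters, the pull-back is `(f, c) ↦ (f ∘ φ, c)`, hence continuous. For the closed
map property fix a continuous right inverse `s` of `φ`: a parameter `(f, c)` of `U` describes a
subspace in the image exactly when `f ∘ s ∘ φ = f`, a closed condition, and then `(f ∘ s, c)` is a
parameter of its preimage under the pull-back, depending continuously on `(f, c)`. -/

open Function Topology

namespace AGr

variable {m : ℕ} {W : Type*} [NormedAddCommGroup W] [NormedSpace ℝ W]

lemma carrier_injective : Injective (carrier : AGr m W → Set W) := by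
  rintro ⟨_, _⟩ ⟨_, _⟩ rfl
  rfl

end AGr

namespace AGrParam

variable {m : ℕ} {W W' : Type*} [NormedAddCommGroup W] [NormedSpace ℝ W]
  [NormedAddCommGroup W'] [NormedSpace ℝ W']

lemma toAGr_surjective : Surjective (toAGr : AGrParam m W → AGr m W) := fun A ↦ by
  obtain ⟨f, hf, c, hc⟩ := A.exists_param
  exact ⟨⟨(f, c), hf⟩, AGr.carrier_injective hc.symm⟩

lemma isQuotientMap_toAGr : IsQuotientMap (toAGr : AGrParam m W → AGr m W) :=
  ⟨⟨rfl⟩, toAGr_surjective⟩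

def precomp (p : AGrParam m W) (g : W' →L[ℝ] W) (hp : Surjective (p.1.1.comp g)) :
    AGrParam m W' :=
  ⟨(p.1.1.comp g, p.1.2), hp⟩

lemma continuous_precomp {X : Type*} [TopologicalSpace X] {F : X → AGrParam m W}
    (hF : Continuous F) (g : W' →L[ℝ] W) (hFg : ∀ x, Surjective ((F x).1.1.comp g)) :
    Continuous fun x ↦ (F x).precomp g (hFg x) := by
  have hF' := continuous_subtype_val.comp hF
  exact ((continuous_fst.comp hF').clm_comp continuous_const).prodMk
    (continuous_snd.comp hF') |>.subtype_mk _

end AGrParam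

namespace AGr

open AGrParam

variable {m : ℕ} {U V E : Type*} [NormedAddCommGroup U] [NormedSpace ℝ U]
  [NormedAddCommGroup V] [NormedSpace ℝ V] [NormedAddCommGroup E] [NormedSpace ℝ E]
  {g : U →L[ℝ] V} {s : V →L[ℝ] U} {P : AGr m V → AGr m U}

/-- An affine equation whose solution set is a union of fibres of `g` factors through `g`. -/
lemma comp_comp_eq_of_setOf_eq_preimage {f : U →L[ℝ] E} (hf : Surjective f) {c : E}
    {H : Set V} (h : {x | f x = c} = g ⁻¹' H) (hgs : RightInverse s g) :
    f.comp (s.comp g) = f := by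
  ext1 x
  obtain ⟨x₀, hx₀⟩ := hf c
  have hx₀H : x₀ ∈ g ⁻¹' H := by rw [← h]; exact hx₀
  have hshift : f (x₀ + (s (g x) - x)) = c := by
    change _ ∈ {x | f x = c}
    rw [h]
    simpa [hgs (g x)] using hx₀H
  rw [map_add, hx₀, add_eq_left, map_sub, sub_eq_zero] at hshift
  exact hshift

lemma surjective_comp_of_comp_comp_eq {f : U →L[ℝ] E} (hf : Surjective f)
    (h : f.comp (s.comp g) = f) : Surjective (f.comp s) := fun y ↦
  let ⟨x, hx⟩ := hf y
  ⟨g x, (DFunLike.congr_fun h x).trans hx⟩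

lemma injective_of_carrier_eq_preimage (hg : Surjective g)
    (hP : ∀ A, (P A).carrier = g ⁻¹' A.carrier) : Injective P := fun A B h ↦
  carrier_injective <| hg.preimage_injective <| by rw [← hP, ← hP, h]

lemma continuous_of_carrier_eq_preimage (hg : Surjective g)
    (hP : ∀ A, (P A).carrier = g ⁻¹' A.carrier) : Continuous P := by
  have hlift : P ∘ toAGr = toAGr ∘ fun p : AGrParam m V ↦ p.precomp g (p.2.comp hg) :=
    funext fun p ↦ carrier_injective (hP _)
  rw [isQuotientMap_toAGr.continuous_iff, hlift]
  exact isQuotientMap_toAGr.continuous.comp (continuous_precomp continuous_id g _)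

lemma isClosedMap_of_carrier_eq_preimage (hgs : RightInverse s g)
    (hP : ∀ A, (P A).carrier = g ⁻¹' A.carrier) : IsClosedMap P := by
  have hPinj := injective_of_carrier_eq_preimage hgs.surjective hP
  -- the parameters of subspaces in the image of `P`
  set S := {p : AGrParam m U | p.1.1.comp (s.comp g) = p.1.1}
  have hS : IsClosed S := by
    have hf : Continuous fun p : AGrParam m U ↦ p.1.1 :=
      continuous_fst.comp continuous_subtype_val
    exact isClosed_eq (hf.clm_comp continuous_const) hf
  let Φ : S → AGrParam m V := fun q ↦ q.1.precomp s (surjective_comp_of_comp_comp_eq q.1.2 q.2)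
  have hΦ : Continuous Φ := continuous_precomp continuous_subtype_val s _
  have hPΦ (q : S) : P (Φ q).toAGr = q.1.toAGr := by
    refine carrier_injective ((hP _).trans (Set.ext fun x ↦ ?_))
    change q.1.1.1 (s (g x)) = q.1.1.2 ↔ q.1.1.1 x = q.1.1.2
    rw [show q.1.1.1 (s (g x)) = q.1.1.1 x from DFunLike.congr_fun q.2 x]
  intro C hC
  have himage : toAGr ⁻¹' (P '' C) = Subtype.val '' (Φ ⁻¹' (toAGr ⁻¹' C)) := by
    ext p
    constructor
    · rintro ⟨A, hA, hAp⟩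
      have hp : p ∈ S :=
        comp_comp_eq_of_setOf_eq_preimage p.2 ((congrArg carrier hAp).symm.trans (hP A)) hgs
      refine ⟨⟨p, hp⟩, ?_, rfl⟩
      rwa [Set.mem_preimage, Set.mem_preimage, hPinj ((hPΦ ⟨p, hp⟩).trans hAp.symm)]
    · rintro ⟨q, hq, rfl⟩
      exact ⟨_, hq, hPΦ q⟩
  rw [← isQuotientMap_toAGr.isClosed_preimage, himage]
  exact hS.isClosedMap_subtype_val _ ((hC.preimage isQuotientMap_toAGr.continuous).preimage hΦ)

theorem isClosedEmbedding_of_carrier_eq_preimage (hgs : RightInverse s g)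
    (hP : ∀ A, (P A).carrier = g ⁻¹' A.carrier) : IsClosedEmbedding P :=
  .of_continuous_injective_isClosedMap (continuous_of_carrier_eq_preimage hgs.surjective hP)
    (injective_of_carrier_eq_preimage hgs.surjective hP)
    (isClosedMap_of_carrier_eq_preimage hgs hP)

end AGr

theorem pullbackAGr_closedEmbedding {m : ℕ} {U V : Type*}
    [NormedAddCommGroup U] [NormedSpace ℝ U] [FiniteDimensional ℝ U]
    [NormedAddCommGroup V] [NormedSpace ℝ V] [FiniteDimensional ℝ V]
    (φ : U →ₗ[ℝ] V) (hφ : Function.Surjective φ) :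
    (∀ A : AGr m V, (pullbackAGr (m := m) φ hφ A).carrier = ⇑φ ⁻¹' A.carrier) ∧
      Function.Injective (pullbackAGr (m := m) φ hφ) ∧
        Topology.IsClosedEmbedding (pullbackAGr (m := m) φ hφ) := by
  have hcarrier (A : AGr m V) : (pullbackAGr φ hφ A).carrier = ⇑φ ⁻¹' A.carrier := rfl
  obtain ⟨s, hs⟩ := φ.exists_rightInverse_of_surjective (LinearMap.range_eq_top.2 hφ)
  have hembed : IsClosedEmbedding (pullbackAGr (m := m) φ hφ) :=
    AGr.isClosedEmbedding_of_carrier_eq_preimage (g := LinearMap.toContinuousLinearMap φ)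
      (s := LinearMap.toContinuousLinearMap s) (DFunLike.congr_fun hs) hcarrier
  exact ⟨hcarrier, hembed.injective, hembed⟩
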